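/- arXiv:2604.03452 — 2 statements merged into one kernel-verified Lean document; each statement's English description precedes it below -/
import Mathlib

section
/- Let G be a directed graph with vertices s and t, and let E* be a set of arcs such that every s–t path in G uses every arc of E*. Then the arcs of E* appear in the same relative order in every s–t path: there is no pair of arcs e1, e2 ∈ E* and two s–t paths P1, P2 such that e1 precedes e2 along P1 but e2 precedes e1 along P2. -/
/-- `p` is a (vertex-simple, directed) path from `s` to `t` in the digraph with arc set `E`. -/
def IsPath {V : Type*} (E : Set (V × V)) (s t : V) (p : List V) : Prop :=
  p ≠ [] ∧ p.head? = some s ∧ p.getLast? = some t ∧ p.Nodup ∧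
    p.Chain' (fun a b => (a, b) ∈ E)

/-- The list of arcs traversed by a path, in order. -/
def arcsOf {V : Type*} (p : List V) : List (V × V) := p.zip p.tail

/-- Arc `e` appears strictly before arc `f` along the path `p`. -/
def Precedes {V : Type*} (p : List V) (e f : V × V) : Prop :=
  ∃ i j : ℕ, i < j ∧ (arcsOf p)[i]? = some e ∧ (arcsOf p)[j]? = some f

section Aux

variable {V : Type*}

lemma arcsOf_nil : arcsOf ([] : List V) = [] := rfl

lemma arcsOf_singleton (x : V) : arcsOf [x] = [] := rfl

lemma arcsOf_cons_cons (x y : V) (l : List V) :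
    arcsOf (x :: y :: l) = (x, y) :: arcsOf (y :: l) := rfl

lemma arcsOf_getElem? {p : List V} {i : ℕ} {e : V × V} :
    (arcsOf p)[i]? = some e ↔ p[i]? = some e.1 ∧ p[i + 1]? = some e.2 := by
  simp [arcsOf, List.getElem?_zip_eq_some, List.getElem?_tail]

lemma arcsOf_nodup {p : List V} (h : p.Nodup) : (arcsOf p).Nodup := by
  have hm : List.map Prod.snd (p.zip p.tail) = p.tail :=
    List.map_snd_zip (by cases p <;> simp)
  have : (List.map Prod.snd (arcsOf p)).Nodup := by
    rw [arcsOf, hm]; exact h.tail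
  exact List.Nodup.of_map _ this

lemma arcsOf_drop : ∀ (n : ℕ) (p : List V), arcsOf (p.drop n) = (arcsOf p).drop n
  | 0, _ => by simp
  | n+1, [] => by simp [arcsOf]
  | n+1, [x] => by simp [arcsOf]
  | n+1, x :: y :: p => by
      simpa [arcsOf_cons_cons] using arcsOf_drop n (y :: p)

lemma arcsOf_take : ∀ (n : ℕ) (p : List V), arcsOf (p.take (n + 1)) = (arcsOf p).take n
  | 0, p => by cases p <;> simp [arcsOf]
  | n+1, [] => by simp [arcsOf]
  | n+1, [x] => by simp [arcsOf]
  | n+1, x :: y :: p => by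
      have := arcsOf_take n (y :: p)
      simp only [List.take_succ_cons, arcsOf_cons_cons] at *
      rw [this]

lemma mem_arcsOf_append (e : V × V) :
    ∀ (l1 l2 : List V), e ∈ arcsOf (l1 ++ l2) ↔
      e ∈ arcsOf l1 ∨ e ∈ arcsOf l2 ∨ (l1.getLast? = some e.1 ∧ l2.head? = some e.2)
  | [], l2 => by simp [arcsOf]
  | [x], l2 => by
      cases l2 with
      | nil => simp [arcsOf]
      | cons h t =>
        obtain ⟨u, w⟩ := e
        rw [List.singleton_append, arcsOf_cons_cons, List.mem_cons]
        constructor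
        · rintro (huw | hm)
          · rw [Prod.mk.injEq] at huw
            exact Or.inr (Or.inr (by simp [huw.1, huw.2]))
          · exact Or.inr (Or.inl hm)
        · rintro (hm | hm | ⟨h1, h2⟩)
          · simp [arcsOf_singleton] at hm
          · exact Or.inr hm
          · simp only [List.getLast?_singleton, Option.some_inj] at h1
            simp only [List.head?_cons, Option.some_inj] at h2
            exact Or.inl (by simp_all)
  | x :: y :: l1, l2 => by
      have := mem_arcsOf_append e (y :: l1) l2
      simp only [List.cons_append, arcsOf_cons_cons] at *
      rw [List.mem_cons, List.mem_cons, this]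
      simp [or_assoc, List.getLast?_cons_cons]

lemma chain'_mem_arcsOf {R : V → V → Prop} :
    ∀ {p : List V}, p.Chain' R → ∀ {e : V × V}, e ∈ arcsOf p → R e.1 e.2
  | [], _, _, he => by simp [arcsOf] at he
  | [x], _, _, he => by simp [arcsOf] at he
  | x :: y :: p, hc, e, he => by
      rw [arcsOf_cons_cons, List.mem_cons] at he
      rcases he with rfl | he
      · exact (List.isChain_cons_cons.mp hc).1
      · exact chain'_mem_arcsOf (List.isChain_cons_cons.mp hc).2 he

lemma exists_dup_split : ∀ {l : List V}, ¬ l.Nodup →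
    ∃ (a b c : List V) (v : V), l = a ++ v :: b ++ v :: c := by
  intro l
  induction l with
  | nil => simp
  | cons x xs ih =>
    intro h
    by_cases hx : x ∈ xs
    · obtain ⟨b, c, rfl⟩ := List.append_of_mem hx
      exact ⟨[], b, c, x, by simp⟩
    · have hxs : ¬ xs.Nodup := by
        simp only [List.nodup_cons] at h; tauto
      obtain ⟨a, b, c, v, rfl⟩ := ih hxs
      exact ⟨x :: a, b, c, v, by simp⟩

lemma walk_to_path (E : Set (V × V)) (s t : V) :
    ∀ (n : ℕ) (p : List V), p.length ≤ n → p ≠ [] → p.head? = some s →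
      p.getLast? = some t → p.Chain' (fun a b => (a, b) ∈ E) →
      ∃ q, IsPath E s t q ∧ ∀ e ∈ arcsOf q, e ∈ arcsOf p := by
  intro n
  induction n with
  | zero => intro p hlen hne _ _ _; cases p <;> simp_all
  | succ n ih =>
    intro p hlen hne hhead hlast hchain
    by_cases hnd : p.Nodup
    · exact ⟨p, ⟨hne, hhead, hlast, hnd, hchain⟩, fun e he => he⟩
    · obtain ⟨a, b, c, v, rfl⟩ := exists_dup_split hnd
      -- new walk : a ++ v :: c
      have hform : a ++ v :: b ++ v :: c = a ++ (v :: (b ++ v :: c)) := by simp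
      have hlen' : (a ++ v :: c).length ≤ n := by
        simp only [List.length_append, List.length_cons] at hlen ⊢; omega
      have hne' : a ++ v :: c ≠ [] := by simp
      have hhead' : (a ++ v :: c).head? = some s := by
        rw [hform] at hhead
        rcases a with _ | ⟨x, a⟩
        · simpa using hhead
        · simpa using hhead
      have hlast' : (a ++ v :: c).getLast? = some t := by
        rw [List.getLast?_append] at hlast ⊢
        have h1 : (v :: c).getLast? = some ((v :: c).getLast (by simp)) :=
          List.getLast?_eq_getLast _
        rw [h1] at hlast ⊢
        simpa using hlast
      have hchain' : (a ++ v :: c).Chain' (fun a b => (a, b) ∈ E) := by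
        rw [hform] at hchain
        unfold List.Chain' at hchain ⊢
        rw [List.isChain_append]
        rw [List.isChain_append] at hchain
        obtain ⟨hca, hcrest, hlink⟩ := hchain
        refine ⟨hca, ?_, ?_⟩
        · exact hcrest.suffix ⟨v :: b, by simp⟩
        · intro x hx y hy
          exact hlink x hx y (by simpa using hy)
      obtain ⟨q, hq, hsub⟩ := ih (a ++ v :: c) hlen' hne' hhead' hlast' hchain'
      refine ⟨q, hq, fun e he => ?_⟩
      have := (mem_arcsOf_append e a (v :: c)).mp (hsub e he)
      rcases this with h | h | ⟨h1, h2⟩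
      · rw [hform]
        exact (mem_arcsOf_append e a (v :: (b ++ v :: c))).mpr (Or.inl h)
      · exact (mem_arcsOf_append e (a ++ v :: b) (v :: c)).mpr (Or.inr (Or.inl h))
      · rw [hform]
        exact (mem_arcsOf_append e a (v :: (b ++ v :: c))).mpr
          (Or.inr (Or.inr ⟨h1, by simpa using h2⟩))

end Aux

/-- If every `s`–`t` path uses every arc of `E*`, then the arcs of `E*` appear in the same
relative order in every `s`–`t` path. -/
theorem mandatory_arcs_same_order {V : Type*} (E Estar : Set (V × V)) (s t : V)
    (hall : ∀ p, IsPath E s t p → ∀ e ∈ Estar, e ∈ arcsOf p) :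
    ¬ ∃ e1 ∈ Estar, ∃ e2 ∈ Estar, ∃ P1 P2 : List V,
        IsPath E s t P1 ∧ IsPath E s t P2 ∧
        Precedes P1 e1 e2 ∧ Precedes P2 e2 e1 := by
  rintro ⟨e1, he1, e2, he2, P1, P2, hP1, hP2, ⟨i, j, hij, hi1, hj2⟩, ⟨k, l, hkl, hk2, hl1⟩⟩
  obtain ⟨hP1ne, hP1h, hP1l, hP1nd, hP1c⟩ := hP1
  obtain ⟨hP2ne, hP2h, hP2l, hP2nd, hP2c⟩ := hP2
  -- basic index facts
  have hi1' := arcsOf_getElem?.mp hi1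
  have hj2' := arcsOf_getElem?.mp hj2
  have hk2' := arcsOf_getElem?.mp hk2
  have hl1' := arcsOf_getElem?.mp hl1
  have hnd1 := arcsOf_nodup hP1nd
  have hnd2 := arcsOf_nodup hP2nd
  -- the walk
  set W := P1.take (i + 2) ++ P2.drop (l + 2) with hW
  have hi2len : i + 2 ≤ P1.length := by
    have h := hi1'.2
    rw [List.getElem?_eq_some_iff] at h
    obtain ⟨h, -⟩ := h
    omega
  have hl2len : l + 2 ≤ P2.length := by
    have h := hl1'.2
    rw [List.getElem?_eq_some_iff] at h
    obtain ⟨h, -⟩ := h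
    omega
  have htake_last : (P1.take (i + 2)).getLast? = some e1.2 := by
    rw [List.getLast?_eq_getElem?, List.length_take]
    rw [List.getElem?_take]
    have : min (i + 2) P1.length = i + 2 := by omega
    rw [this]
    simpa using hi1'.2
  have hWne : W ≠ [] := by
    simp only [hW]
    intro h
    rw [List.append_eq_nil_iff] at h
    have := h.1
    rw [List.take_eq_nil_iff] at this
    rcases this with h' | h' <;> simp_all
  have hWh : W.head? = some s := by
    rw [hW, List.head?_append_of_ne_nil, List.head?_eq_getElem?, List.getElem?_take]
    · rw [if_pos (by omega), ← List.head?_eq_getElem?]; exact hP1h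
    · intro h
      rw [List.take_eq_nil_iff] at h
      rcases h with h' | h' <;> simp_all
  have hWl : W.getLast? = some t := by
    rw [hW, List.getLast?_append]
    by_cases hd : P2.drop (l + 2) = []
    · rw [hd]
      simp only [List.getLast?_nil, Option.none_or]
      rw [htake_last]
      -- e1.2 = t, since l + 2 = P2.length
      have hlen2 : P2.length = l + 2 := by
        rw [List.drop_eq_nil_iff] at hd; omega
      have : P2.getLast? = some e1.2 := by
        rw [List.getLast?_eq_getElem?, hlen2]
        simpa using hl1'.2
      rw [hP2l] at this
      rw [this]
    · have hg : (P2.drop (l + 2)).getLast? = some ((P2.drop (l + 2)).getLast hd) :=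
        List.getLast?_eq_getLast _
      have hpre : P2.take (l + 2) ++ P2.drop (l + 2) = P2 := by simp
      have hgl : (P2.drop (l + 2)).getLast? = P2.getLast? := by
        conv_rhs => rw [← hpre]
        rw [List.getLast?_append, hg, Option.some_or]
      rw [hg, Option.some_or, ← hg, hgl, hP2l]
  have hWc : W.Chain' (fun a b => (a, b) ∈ E) := by
    rw [hW]
    unfold List.Chain'
    rw [List.isChain_append]
    refine ⟨hP1c.prefix (List.take_prefix _ _), hP2c.suffix (List.drop_suffix _ _), ?_⟩
    intro x hx y hy
    rw [htake_last, Option.mem_def, Option.some_inj] at hx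
    rw [List.head?_drop, Option.mem_def] at hy
    subst hx
    -- arc (e1.2, y) is arcsOf P2 [l+1]
    have harc : (arcsOf P2)[l + 1]? = some (e1.2, y) := by
      rw [arcsOf_getElem?]
      exact ⟨hl1'.2, hy⟩
    have := chain'_mem_arcsOf hP2c (e := (e1.2, y)) (List.mem_of_getElem? harc)
    exact this
  -- e2 ∉ arcsOf W
  have hje2 : e2 ∉ arcsOf W := by
    intro hmem
    rw [hW, mem_arcsOf_append] at hmem
    rcases hmem with h | h | ⟨h1, h2⟩
    · -- in take part
      rw [show i + 2 = (i + 1) + 1 from rfl, arcsOf_take] at h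
      obtain ⟨m, hm⟩ := List.mem_iff_getElem?.mp h
      rw [List.getElem?_take] at hm
      by_cases hmi : m < i + 1
      · rw [if_pos hmi] at hm
        have hmlen : m < (arcsOf P1).length := by
          rw [List.getElem?_eq_some_iff] at hm; exact hm.1
        have : m = j := (List.getElem?_inj hmlen hnd1).mp (by rw [hm, hj2])
        omega
      · rw [if_neg hmi] at hm; simp at hm
    · -- in drop part
      rw [arcsOf_drop] at h
      obtain ⟨m, hm⟩ := List.mem_iff_getElem?.mp h
      rw [List.getElem?_drop] at hm
      have hmlen : l + 2 + m < (arcsOf P2).length := by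
        rw [List.getElem?_eq_some_iff] at hm; exact hm.1
      have : l + 2 + m = k := (List.getElem?_inj hmlen hnd2).mp (by rw [hm, hk2])
      omega
    · -- junction arc
      rw [htake_last, Option.some_inj] at h1
      rw [List.head?_drop] at h2
      have harc : (arcsOf P2)[l + 1]? = some e2 := by
        rw [arcsOf_getElem?]
        exact ⟨by rw [← h1]; exact hl1'.2, h2⟩
      have hlen' : l + 1 < (arcsOf P2).length := by
        rw [List.getElem?_eq_some_iff] at harc; exact harc.1
      have : l + 1 = k := (List.getElem?_inj hlen' hnd2).mp (by rw [harc, hk2])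
      omega
  -- trim the walk to a path, contradiction with hall
  obtain ⟨q, hq, hsub⟩ := walk_to_path E s t W.length W le_rfl hWne hWh hWl hWc
  exact hje2 (hsub e2 (hall q hq e2 he2))
end

section
/- Let G be a directed graph, s, t vertices, and e1, e2 two arcs that both lie on every s–t path. Suppose P1 is an s–t path using e1 before e2, and P2 is an s–t path using e2 before e1. Let u be the tail of e2. Then the walk formed by concatenating the segment of P2 from s to u with the segment of P1 from u to t is a simple path from s to t that does not contain the arc e1, contradicting the hypothesis. Hence no such pair of paths P1, P2 exists. -/
section Aux

variable {V : Type*}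

lemma length_arcsOf (l : List V) : (arcsOf l).length = l.length - 1 := by
  simp [arcsOf, List.length_zip, List.length_tail]

lemma arcsOf_append_cons (X : List V) (a : V) (Y : List V) :
    arcsOf (X ++ a :: Y) = arcsOf (X ++ [a]) ++ arcsOf (a :: Y) := by
  induction X with
  | nil => simp [arcsOf]
  | cons x X ih =>
    cases X with
    | nil => simp [arcsOf, List.zip]
    | cons y X' =>
      simp only [List.cons_append, arcsOf_cons_cons] at *
      rw [ih]

lemma getElem?_arcsOf {p : List V} {e : V × V} {i : ℕ} :
    (arcsOf p)[i]? = some e ↔ p[i]? = some e.1 ∧ p[i + 1]? = some e.2 := by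
  simp [arcsOf, List.getElem?_zip_eq_some, List.getElem?_tail]

lemma mem_arcsOf {p : List V} {e : V × V} :
    e ∈ arcsOf p ↔ ∃ i : ℕ, (arcsOf p)[i]? = some e := List.mem_iff_getElem?

/-- From any `Chain'` walk one can extract a nodup walk with the same endpoints whose
arcs are among the arcs of the original walk. -/
lemma exists_nodup_chain' (R : V → V → Prop) :
    ∀ n (p : List V), p.length ≤ n → p.Chain' R →
      ∃ q : List V, q.Nodup ∧ q.Chain' R ∧ q.head? = p.head? ∧ q.getLast? = p.getLast? ∧
        ∀ e ∈ arcsOf q, e ∈ arcsOf p := by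
  intro n
  induction n with
  | zero =>
    intro p hp _
    have : p = [] := List.eq_nil_of_length_eq_zero (Nat.le_zero.mp hp)
    exact ⟨[], by simp [this, arcsOf]; exact List.isChain_nil⟩
  | succ n ih =>
    intro p hp hc
    by_cases hnd : p.Nodup
    · exact ⟨p, hnd, hc, rfl, rfl, fun e he => he⟩
    · obtain ⟨x, hx⟩ := List.exists_duplicate_iff_not_nodup.2 hnd
      have hsub := List.duplicate_iff_sublist.1 hx
      rw [List.cons_sublist_iff] at hsub
      obtain ⟨r₁, r₂, hrr, hx1, hx2⟩ := hsub
      rw [List.singleton_sublist] at hx2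
      obtain ⟨A, B1, hA⟩ := List.append_of_mem hx1
      obtain ⟨B2, C, hB⟩ := List.append_of_mem hx2
      have hp_eq : p = A ++ x :: ((B1 ++ B2) ++ x :: C) := by
        rw [hrr, hA, hB]; simp
      -- the suffix x :: C and prefix pieces
      have hmid : ((x :: (B1 ++ B2)) ++ x :: C) = (x :: ((B1 ++ B2) ++ x :: C)) := by simp
      have hcA : (A ++ x :: C).Chain' R := by
        rw [List.Chain', List.isChain_append]
        rw [hp_eq, List.Chain', List.isChain_append] at hc
        obtain ⟨hc1, hc2, hc3⟩ := hc
        refine ⟨hc1, ?_, ?_⟩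
        · refine hc2.infix ?_
          exact (List.suffix_append (x :: (B1 ++ B2)) (x :: C)).isInfix.trans
            (by rw [hmid])
        · intro a ha y hy
          exact hc3 a ha y (by simpa using hy)
      have hlen : (A ++ x :: C).length ≤ n := by
        have h1 : p.length ≤ n + 1 := hp
        rw [hp_eq] at h1
        simp only [List.length_append, List.length_cons] at h1 ⊢
        omega
      obtain ⟨q, hq1, hq2, hq3, hq4, hq5⟩ := ih (A ++ x :: C) hlen hcA
      refine ⟨q, hq1, hq2, ?_, ?_, ?_⟩
      · rw [hq3, hp_eq]; simp [List.head?_append]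
      · rw [hq4, hp_eq, ← hmid]
        rw [List.getLast?_append, List.getLast?_append, List.getLast?_append]
        have h5 : (x :: C).getLast? = some ((x :: C).getLast (by simp)) :=
          List.getLast?_eq_getLast _
        rw [h5]
        simp [Option.or]
      · intro e he
        have he' := hq5 e he
        rw [arcsOf_append_cons A x C] at he'
        rw [hp_eq, arcsOf_append_cons A x ((B1 ++ B2) ++ x :: C), ← hmid,
          arcsOf_append_cons (x :: (B1 ++ B2)) x C]
        rcases List.mem_append.1 he' with h | h
        · exact List.mem_append.2 (Or.inl h)
        · exact List.mem_append.2 (Or.inr (List.mem_append.2 (Or.inr h)))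

end Aux

/-- If `e1`, `e2` lie on every `s`–`t` path, `P1` uses `e1` before `e2`, `P2` uses `e2` before
`e1`, and `u` is the tail of `e2`, then the concatenation of the segment of `P2` from `s` to `u`
with the segment of `P1` from `u` to `t` is a simple `s`–`t` path avoiding `e1`; this
contradicts the hypothesis, so no such pair of paths exists. -/
theorem no_conflicting_order {V : Type*} [DecidableEq V] (E : Set (V × V)) (s t : V)
    (e1 e2 : V × V)
    (h1 : ∀ p, IsPath E s t p → e1 ∈ arcsOf p)
    (h2 : ∀ p, IsPath E s t p → e2 ∈ arcsOf p)
    (P1 P2 : List V) (hP1 : IsPath E s t P1) (hP2 : IsPath E s t P2)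
    (ho1 : Precedes P1 e1 e2) (ho2 : Precedes P2 e2 e1)
    (u : V) (hu : u = e2.1) (huP1 : u ∈ P1) (huP2 : u ∈ P2) :
    (IsPath E s t (P2.takeWhile (· ≠ u) ++ P1.dropWhile (· ≠ u)) ∧
      e1 ∉ arcsOf (P2.takeWhile (· ≠ u) ++ P1.dropWhile (· ≠ u))) ∧ False := by
  have F : False := by
    obtain ⟨hP1ne, hP1h, hP1l, hP1nd, hP1c⟩ := hP1
    obtain ⟨hP2ne, hP2h, hP2l, hP2nd, hP2c⟩ := hP2
    set A1 := P1.takeWhile (fun x => decide (x ≠ u)) with hA1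
    set A2 := P2.takeWhile (fun x => decide (x ≠ u)) with hA2
    set D1 := P1.dropWhile (fun x => decide (x ≠ u)) with hD1
    set D2 := P2.dropWhile (fun x => decide (x ≠ u)) with hD2
    have hsplit1 : P1 = A1 ++ D1 := List.takeWhile_append_dropWhile.symm
    have hsplit2 : P2 = A2 ++ D2 := List.takeWhile_append_dropWhile.symm
    -- u is not in the takeWhile parts
    have huA1 : u ∉ A1 := fun h => by simpa using List.mem_takeWhile_imp h
    have huA2 : u ∉ A2 := fun h => by simpa using List.mem_takeWhile_imp h
    -- heads of the dropWhile parts are u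
    have hD1head : ∃ C1, D1 = u :: C1 := by
      have hmem : u ∈ D1 := by
        rcases List.mem_append.1 (hsplit1 ▸ huP1) with h | h
        · exact absurd h huA1
        · exact h
      cases hD : D1 with
      | nil => rw [hD] at hmem; simp at hmem
      | cons c C1 =>
        have := List.head?_dropWhile_not (fun x => decide (x ≠ u)) P1
        rw [← hD1, hD] at this
        simp only [List.head?_cons] at this
        have hc : c = u := by simpa using this
        exact ⟨C1, by rw [hc]⟩
    have hD2head : ∃ C2, D2 = u :: C2 := by
      have hmem : u ∈ D2 := by
        rcases List.mem_append.1 (hsplit2 ▸ huP2) with h | h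
        · exact absurd h huA2
        · exact h
      cases hD : D2 with
      | nil => rw [hD] at hmem; simp at hmem
      | cons c C2 =>
        have := List.head?_dropWhile_not (fun x => decide (x ≠ u)) P2
        rw [← hD2, hD] at this
        simp only [List.head?_cons] at this
        have hc : c = u := by simpa using this
        exact ⟨C2, by rw [hc]⟩
    obtain ⟨C1, hC1⟩ := hD1head
    obtain ⟨C2, hC2⟩ := hD2head
    rw [hC1] at hsplit1
    rw [hC2] at hsplit2
    -- u sits at index |A1| in P1 and |A2| in P2
    have hP1u : P1[A1.length]? = some u := by
      rw [hsplit1, List.getElem?_append]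
      simp
    have hP2u : P2[A2.length]? = some u := by
      rw [hsplit2, List.getElem?_append]
      simp
    -- e1 does not occur among the arcs of u :: C1 (the tail of P1 from u)
    obtain ⟨i1, j1, hij1, hi1, hj1⟩ := ho1
    have hj1' : P1[j1]? = some u := by
      rw [getElem?_arcsOf] at hj1
      rw [hj1.1, hu]
    have hj1len : j1 < P1.length := (List.getElem?_eq_some_iff.1 hj1').1
    have hj1eq : j1 = A1.length := (List.getElem?_inj hj1len hP1nd).1 (hj1'.trans hP1u.symm)
    have hnotD1 : e1 ∉ arcsOf (u :: C1) := by
      intro hmem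
      obtain ⟨k, hk⟩ := mem_arcsOf.1 hmem
      have harcs : arcsOf P1 = arcsOf (A1 ++ [u]) ++ arcsOf (u :: C1) := by
        rw [hsplit1, arcsOf_append_cons]
      have hlenfst : (arcsOf (A1 ++ [u])).length = A1.length := by
        rw [length_arcsOf]; simp
      have hk' : (arcsOf P1)[A1.length + k]? = some e1 := by
        rw [harcs, List.getElem?_append, hlenfst, if_neg (by omega : ¬(A1.length + k < A1.length)),
          Nat.add_sub_cancel_left]
        exact hk
      -- e1 occurs at indices i1 and A1.length + k in arcsOf P1
      have hi1v : P1[i1]? = some e1.1 := (getElem?_arcsOf.1 hi1).1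
      have hk'v : P1[A1.length + k]? = some e1.1 := (getElem?_arcsOf.1 hk').1
      have hi1len : i1 < P1.length := (List.getElem?_eq_some_iff.1 hi1v).1
      have : i1 = A1.length + k := (List.getElem?_inj hi1len hP1nd).1 (hi1v.trans hk'v.symm)
      omega
    -- e1 does not occur among the arcs of A2 ++ [u] (the start of P2 up to u)
    obtain ⟨i2, j2, hij2, hi2, hj2⟩ := ho2
    have hi2' : P2[i2]? = some u := by
      rw [getElem?_arcsOf] at hi2
      rw [hi2.1, hu]
    have hi2len : i2 < P2.length := (List.getElem?_eq_some_iff.1 hi2').1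
    have hi2eq : i2 = A2.length := (List.getElem?_inj hi2len hP2nd).1 (hi2'.trans hP2u.symm)
    have hnotA2 : e1 ∉ arcsOf (A2 ++ [u]) := by
      intro hmem
      obtain ⟨k, hk⟩ := mem_arcsOf.1 hmem
      have hlenfst : (arcsOf (A2 ++ [u])).length = A2.length := by
        rw [length_arcsOf]; simp
      have hklt : k < A2.length := by
        have := (List.getElem?_eq_some_iff.1 hk).1
        omega
      have harcs : arcsOf P2 = arcsOf (A2 ++ [u]) ++ arcsOf (u :: C2) := by
        rw [hsplit2, arcsOf_append_cons]
      have hk' : (arcsOf P2)[k]? = some e1 := by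
        rw [harcs, List.getElem?_append_left (by omega)]
        exact hk
      have hj2v : P2[j2]? = some e1.1 := (getElem?_arcsOf.1 hj2).1
      have hk'v : P2[k]? = some e1.1 := (getElem?_arcsOf.1 hk').1
      have hklen : k < P2.length := (List.getElem?_eq_some_iff.1 hk'v).1
      have : k = j2 := (List.getElem?_inj hklen hP2nd).1 (hk'v.trans hj2v.symm)
      omega
    -- the concatenated walk
    set W := A2 ++ u :: C1 with hW
    have hWc : W.Chain' (fun a b => (a, b) ∈ E) := by
      rw [hW, List.Chain', List.isChain_append]
      have hc2 := hP2c
      rw [hsplit2, List.Chain', List.isChain_append] at hc2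
      obtain ⟨hc2a, _, hc2j⟩ := hc2
      have hc1 : (u :: C1).Chain' (fun a b => (a, b) ∈ E) := by
        refine hP1c.infix ?_
        rw [hsplit1]
        exact (List.suffix_append A1 (u :: C1)).isInfix
      exact ⟨hc2a, hc1, fun a ha y hy => hc2j a ha y (by simpa using hy)⟩
    have hWh : W.head? = some s := by
      rw [hW]
      rw [hsplit2] at hP2h
      simpa [List.head?_append] using hP2h
    have hWl : W.getLast? = some t := by
      rw [hW, List.getLast?_append]
      rw [hsplit1, List.getLast?_append] at hP1l
      have h5 : (u :: C1).getLast? = some ((u :: C1).getLast (by simp)) :=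
        List.getLast?_eq_getLast _
      rw [h5] at hP1l ⊢
      simpa [Option.or] using hP1l
    have hWe1 : e1 ∉ arcsOf W := by
      rw [hW, arcsOf_append_cons]
      intro hmem
      rcases List.mem_append.1 hmem with h | h
      · exact hnotA2 h
      · exact hnotD1 h
    obtain ⟨q, hq1, hq2, hq3, hq4, hq5⟩ :=
      exists_nodup_chain' (fun a b => (a, b) ∈ E) W.length W le_rfl hWc
    have hqne : q ≠ [] := by
      intro h
      rw [h] at hq3
      rw [hWh] at hq3
      simp at hq3
    have hqpath : IsPath E s t q := ⟨hqne, hq3.trans hWh, hq4.trans hWl, hq1, hq2⟩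
    exact hWe1 (hq5 e1 (h1 q hqpath))
  exact ⟨F.elim, F⟩
end
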